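/- arXiv:math/0011023 — 8 statements merged into one kernel-verified Lean document; each statement's English description precedes it below -/
import Mathlib

section
/- For all s ≥ 0 and real x with the denominators nonzero, 1/(U_0(x)U_1(x)) + 1/(U_1(x)U_2(x)) + ··· + 1/(U_s(x)U_{s+1}(x)) = U_s(x)/U_{s+1}(x). -/
/-- Chebyshev polynomials of the second kind: `U 0 = 1`, `U 1 x = 2x`,
`U (n+1) x = 2x * U n x - U (n-1) x`. -/
def chebU : ℕ → ℝ → ℝ
  | 0, _ => 1
  | 1, x => 2 * x
  | (k + 2), x => 2 * x * chebU (k + 1) x - chebU k x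

/-! The Cassini-type identity `U_{n+1}² - U_n U_{n+2} = 1` makes the summand
`1/(U_n U_{n+1})` the difference `U_n/U_{n+1} - U_{n-1}/U_n`, so the sum telescopes. -/

lemma chebU_add_two (n : ℕ) (x : ℝ) :
    chebU (n + 2) x = 2 * x * chebU (n + 1) x - chebU n x := rfl

lemma chebU_sq_sub_mul (n : ℕ) (x : ℝ) :
    chebU (n + 1) x ^ 2 - chebU n x * chebU (n + 2) x = 1 := by
  induction n with
  | zero => simp only [chebU]; ring
  | succ k ih =>
    linear_combination ih - chebU (k + 1) x * chebU_add_two (k + 1) x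
      + chebU (k + 2) x * chebU_add_two k x

lemma chebU_div_succ_sub_div (n : ℕ) (x : ℝ) (h₁ : chebU (n + 1) x ≠ 0)
    (h₂ : chebU (n + 2) x ≠ 0) :
    chebU (n + 1) x / chebU (n + 2) x - chebU n x / chebU (n + 1) x
      = 1 / (chebU (n + 1) x * chebU (n + 2) x) := by
  rw [div_sub_div _ _ h₂ h₁, ← chebU_sq_sub_mul n x]
  ring

/-- For all `s ≥ 0` and real `x` with the denominators nonzero,
`1/(U_0 U_1) + 1/(U_1 U_2) + ⋯ + 1/(U_s U_{s+1}) = U_s/U_{s+1}`. -/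
theorem chebU_inv_sum (s : ℕ) (x : ℝ) (hne : ∀ i ≤ s + 1, chebU i x ≠ 0) :
    ∑ i ∈ Finset.range (s + 1), 1 / (chebU i x * chebU (i + 1) x)
      = chebU s x / chebU (s + 1) x := by
  induction s with
  | zero => simp [chebU]
  | succ k ih =>
    rw [Finset.sum_range_succ, ih fun i hi => hne i (by omega),
      ← chebU_div_succ_sub_div k x (hne (k + 1) (by omega)) (hne (k + 2) (by omega))]
    ring
end

section
/- For nonnegative integers i₁, i₂, i₃ with i₂ ≤ i₃, Σ_{ℓ=0}^{i₃−i₂−1} C(i₃+i₁−1, ℓ) = Σ_{ℓ=0}^{i₃−i₂−1} C(i₁+i₂+ℓ, ℓ)·c_ℓ, where c_ℓ = 2^{i₃−i₂−ℓ−2} if ℓ < i₃−i₂−1 and c_ℓ = 1 if ℓ = i₃−i₂−1. -/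
/-!
Write `m = i₁ + i₂` and `d = i₃ - i₂`. After splitting off the last term on the right, the claim
becomes `∑_{ℓ ≤ n} C(m+ℓ, ℓ) 2^(n-ℓ) = ∑_{k ≤ n} C(m+n+1, k)` with `n = d - 2`. Both sides satisfy
`a (n+1) = 2 a n + C(m+n+1, n+1)`: on the right this is Pascal's rule summed over `k ≤ n+1`,
which counts every `C(m+n+1, k)` with `k ≤ n` twice.
-/

open Finset

namespace Nat

theorem sum_range_succ_choose_succ (N n : ℕ) :
    ∑ k ∈ range (n + 1), (N + 1).choose k
      = ∑ k ∈ range (n + 1), N.choose k + ∑ k ∈ range n, N.choose k := by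
  rw [sum_range_succ', sum_range_succ' (fun k => N.choose k)]
  simp only [choose_succ_succ', sum_add_distrib, choose_zero_right]
  omega

theorem sum_range_choose_mul_two_pow (m n : ℕ) :
    ∑ ℓ ∈ range (n + 1), (m + ℓ).choose ℓ * 2 ^ (n - ℓ)
      = ∑ k ∈ range (n + 1), (m + n + 1).choose k := by
  induction n with
  | zero => simp
  | succ n ih =>
    have double : ∑ ℓ ∈ range (n + 1), (m + ℓ).choose ℓ * 2 ^ (n + 1 - ℓ)
        = 2 * ∑ ℓ ∈ range (n + 1), (m + ℓ).choose ℓ * 2 ^ (n - ℓ) := by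
      rw [mul_sum]
      refine sum_congr rfl fun ℓ hℓ => ?_
      rw [Nat.sub_add_comm (mem_range_succ_iff.mp hℓ), pow_succ]
      ring
    rw [sum_range_succ, double, ih, Nat.sub_self, pow_zero, mul_one, ← add_assoc m n 1,
      sum_range_succ_choose_succ (m + n + 1) (n + 1), sum_range_succ _ (n + 1)]
    ring

end Nat

theorem binom_sum_transform_general (i₁ i₂ i₃ : ℕ) :
    ∑ ℓ ∈ Finset.range (i₃ - i₂), Nat.choose (i₃ + i₁ - 1) ℓ
      = ∑ ℓ ∈ Finset.range (i₃ - i₂),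
          Nat.choose (i₁ + i₂ + ℓ) ℓ *
            (if ℓ < i₃ - i₂ - 1 then 2 ^ (i₃ - i₂ - ℓ - 2) else 1) := by
  obtain hd | hd | ⟨n, hd⟩ : i₃ - i₂ = 0 ∨ i₃ - i₂ = 1 ∨ ∃ n, i₃ - i₂ = n + 2 := by
    rcases i₃ - i₂ with _ | _ | n <;> simp
  · simp [hd]
  · simp [hd]
  · have hN : i₃ + i₁ - 1 = i₁ + i₂ + n + 1 := by omega
    have weights : ∀ ℓ ∈ range (n + 1), (i₁ + i₂ + ℓ).choose ℓ *
        (if ℓ < n + 2 - 1 then 2 ^ (n + 2 - ℓ - 2) else 1) = (i₁ + i₂ + ℓ).choose ℓ * 2 ^ (n - ℓ) :=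
      fun ℓ hℓ => by rw [if_pos (by simp at hℓ; omega), show n + 2 - ℓ - 2 = n - ℓ by omega]
    rw [hd, hN, sum_range_succ, sum_range_succ _ (n + 1), sum_congr rfl weights,
      Nat.sum_range_choose_mul_two_pow, if_neg (by omega), mul_one, ← add_assoc]

/-- For nonnegative integers `i₁, i₂, i₃` with `i₂ ≤ i₃`,
`Σ_{ℓ=0}^{i₃−i₂−1} C(i₃+i₁−1, ℓ) = Σ_{ℓ=0}^{i₃−i₂−1} C(i₁+i₂+ℓ, ℓ)·c_ℓ`,
where `c_ℓ = 2^{i₃−i₂−ℓ−2}` if `ℓ < i₃−i₂−1` and `c_ℓ = 1` if `ℓ = i₃−i₂−1`. -/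
theorem binom_sum_transform (i₁ i₂ i₃ : ℕ) (h : i₂ ≤ i₃) :
    ∑ ℓ ∈ Finset.range (i₃ - i₂), Nat.choose (i₃ + i₁ - 1) ℓ
      = ∑ ℓ ∈ Finset.range (i₃ - i₂),
          Nat.choose (i₁ + i₂ + ℓ) ℓ *
            (if ℓ < i₃ - i₂ - 1 then 2 ^ (i₃ - i₂ - ℓ - 2) else 1) :=
  binom_sum_transform_general i₁ i₂ i₃
end

section
/- The number of lattice paths of length 2n with steps (1,1) and (1,−1), starting at the origin and never passing below the x-axis (with arbitrary final height), equals the central binomial coefficient C(2n, n). -/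
/-!
Refine the count by the final height: for `0 ≤ h` and `2u = m + h`, the nonnegative paths of
length `m` ending at height at least `h` number `C(m, u)`. Splitting by the last step gives
`N(m+1, h) = N(m, h-1) + N(m, h+1)` for `h ≥ 0`, which is Pascal's rule. The only boundary case
is `h = 0` with `m` odd, where `N(m, -1) = N(m, 0) = N(m, 1)` because a nonnegative path of odd
length ends at an odd, hence positive, height; then `C(m, (m+1)/2) = C(m, (m-1)/2)` closes it.
For `m = 2n`, `h = 0` every nonnegative path is counted.
-/

open Finset

theorem Fin.card_filter_snoc {α : Type*} [Fintype α] {m : ℕ} (P : (Fin (m + 1) → α) → Prop)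
    [DecidablePred P] :
    #{p | P p} = ∑ a, #{q : Fin m → α | P (Fin.snoc q a)} := by
  simp only [card_filter]
  rw [← Fintype.sum_equiv (Fin.snocEquiv fun _ => α) _ _ (fun _ => rfl), Fintype.sum_prod_type]
  rfl

namespace BallotPath

variable {m : ℕ}

def height (p : Fin m → Bool) (k : ℕ) : ℤ :=
  ∑ i ∈ univ.filter (fun i : Fin m => (i : ℕ) < k), if p i then 1 else -1

def IsNonneg (p : Fin m → Bool) : Prop := ∀ k ≤ m, 0 ≤ height p k

instance : DecidablePred (IsNonneg (m := m)) := fun _ => Nat.decidableBallLE _ _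

theorem height_snoc_of_le (q : Fin m → Bool) (b : Bool) {k : ℕ} (hk : k ≤ m) :
    height (Fin.snoc q b : Fin (m + 1) → Bool) k = height q k := by
  simp only [height, sum_filter, Fin.sum_univ_castSucc, Fin.snoc_castSucc, Fin.val_castSucc,
    Fin.val_last, not_lt.2 hk, if_false, add_zero]

theorem height_snoc_last (q : Fin m → Bool) (b : Bool) :
    height (Fin.snoc q b : Fin (m + 1) → Bool) (m + 1) = height q m + if b then 1 else -1 := by
  simp [height, sum_filter, Fin.sum_univ_castSucc, Fin.snoc_castSucc, Fin.val_last]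

theorem even_height_add (p : Fin m → Bool) : Even (height p m + m) := by
  induction m with
  | zero => simp [height]
  | succ m ih =>
    rw [← Fin.snoc_init_self p, height_snoc_last, Int.even_iff]
    have := Int.even_iff.1 (ih (Fin.init p))
    split <;> push_cast <;> omega

theorem isNonneg_snoc (q : Fin m → Bool) (b : Bool) :
    IsNonneg (Fin.snoc q b : Fin (m + 1) → Bool) ↔
      IsNonneg q ∧ 0 ≤ height q m + if b then 1 else -1 := by
  refine ⟨fun h => ⟨fun k hk => ?_, ?_⟩, fun ⟨hq, hlast⟩ k hk => ?_⟩
  · simpa only [height_snoc_of_le q b hk] using h k (by omega)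
  · simpa only [height_snoc_last] using h (m + 1) le_rfl
  · obtain hk | rfl := Nat.le_succ_iff.1 hk
    · simpa only [height_snoc_of_le q b hk] using hq k hk
    · simpa only [height_snoc_last] using hlast

theorem IsNonneg.height_nonneg {p : Fin m → Bool} (hp : IsNonneg p) : 0 ≤ height p m :=
  hp m le_rfl

def nonnegPaths (m : ℕ) (h : ℤ) : Finset (Fin m → Bool) :=
  {p | IsNonneg p ∧ h ≤ height p m}

theorem nonnegPaths_of_nonpos {h : ℤ} (hh : h ≤ 0) :
    nonnegPaths m h = ({p | IsNonneg p} : Finset _) := by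
  ext p
  simp only [nonnegPaths, mem_filter, mem_univ, true_and, and_iff_left_iff_imp]
  exact fun hp => hh.trans hp.height_nonneg

theorem nonnegPaths_one_of_odd (hm : Odd m) :
    nonnegPaths m 1 = ({p | IsNonneg p} : Finset _) := by
  ext p
  simp only [nonnegPaths, mem_filter, mem_univ, true_and, and_iff_left_iff_imp]
  intro hp
  obtain ⟨v, rfl⟩ := hm
  have hparity := Int.even_iff.1 (even_height_add p)
  push_cast at hparity
  have := hp.height_nonneg
  omega

theorem card_nonnegPaths_succ {h : ℤ} (hh : 0 ≤ h) :
    #(nonnegPaths (m + 1) h) = #(nonnegPaths m (h - 1)) + #(nonnegPaths m (h + 1)) := by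
  rw [nonnegPaths, Fin.card_filter_snoc, Fintype.sum_bool]
  congr 2 <;> ext q <;>
    simp only [nonnegPaths, mem_filter, mem_univ, true_and, isNonneg_snoc, height_snoc_last,
      if_true, Bool.false_eq_true, if_false]
  · exact ⟨fun ⟨⟨hq, _⟩, hq'⟩ => ⟨hq, by omega⟩,
      fun ⟨hq, hq'⟩ => ⟨⟨hq, by linarith [hq.height_nonneg]⟩, by omega⟩⟩
  · exact ⟨fun ⟨⟨hq, _⟩, hq'⟩ => ⟨hq, by omega⟩,
      fun ⟨hq, hq'⟩ => ⟨⟨hq, by omega⟩, by omega⟩⟩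

theorem card_nonnegPaths {h : ℤ} (hh : 0 ≤ h) {u : ℕ} (hu : (2 * u : ℤ) = m + h) :
    #(nonnegPaths m h) = m.choose u := by
  induction m generalizing h u with
  | zero =>
    have hp (p : Fin 0 → Bool) : IsNonneg p ∧ height p 0 = 0 := by simp [IsNonneg, height]
    rcases u with _ | u
    · obtain rfl : h = 0 := by omega
      simp [nonnegPaths, hp]
    · simp [nonnegPaths, hp, show ¬ h ≤ 0 by omega]
  | succ m ih =>
    obtain ⟨v, rfl⟩ : ∃ v, u = v + 1 := ⟨u - 1, by omega⟩
    rw [card_nonnegPaths_succ hh, Nat.choose_succ_succ',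
      ih (h := h + 1) (u := v + 1) (by omega) (by push_cast at hu ⊢; omega)]
    obtain hh | rfl := hh.lt_or_eq
    · rw [ih (h := h - 1) (u := v) (by omega) (by push_cast at hu ⊢; omega)]
    · obtain rfl : m = 2 * v + 1 := by omega
      rw [nonnegPaths_of_nonpos (h := 0 - 1) (by norm_num),
        ← nonnegPaths_one_of_odd (odd_two_mul_add_one v),
        ih zero_le_one (u := v + 1) (by push_cast; ring), Nat.choose_symm_half]

end BallotPath

open BallotPath in
/-- The number of lattice paths of `2n` steps `(1,1)` and `(1,−1)`, starting at the origin
and never passing below the x-axis (arbitrary final height), equals `C(2n, n)`.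
A path is encoded as `p : Fin (2n) → Bool` (`true` = up-step); the nonnegativity condition
says every partial sum of the `±1` increments is `≥ 0`. -/
theorem ballot_paths_card (n : ℕ) :
    Nat.card {p : Fin (2 * n) → Bool //
        ∀ k : ℕ, k ≤ 2 * n →
          0 ≤ ∑ i ∈ Finset.univ.filter (fun i : Fin (2 * n) => (i : ℕ) < k),
                (if p i then (1 : ℤ) else -1)}
      = Nat.choose (2 * n) n := by
  have hcard := card_nonnegPaths (m := 2 * n) le_rfl (u := n) (by push_cast; ring)
  rw [nonnegPaths_of_nonpos le_rfl] at hcard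
  rw [Nat.card_eq_fintype_card, Fintype.card_subtype]
  exact hcard
end

section
/- The number of shifted Ferrers diagrams contained in the shifted staircase with row lengths (2n−1, 2n−3, …, 1) equals C(2n, n). -/
open Finset

/-- Partial-sum of binomial coefficients: `S n c = ∑_{j=c-n}^{n} C(c,j)`. -/
def ssS (n c : ℕ) : ℕ := ∑ j ∈ Finset.Icc (c - n) n, Nat.choose c j

lemma ssS_zero (n : ℕ) : ssS n 0 = 1 := by
  unfold ssS
  rw [Nat.zero_sub, Finset.sum_eq_single 0]
  · simp
  · intro b hb hb0
    exact Nat.choose_eq_zero_of_lt (by omega)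
  · intro h
    simp at h

lemma ssS_step (n c : ℕ) (hc : c ≤ 2 * n) : ssS (n + 1) (c + 1) = ssS (n + 1) c + ssS n c := by
  unfold ssS
  rcases le_or_gt c n with h | h
  · -- lower bounds are all 0
    have h1 : c + 1 - (n + 1) = 0 := by omega
    have h2 : c - (n + 1) = 0 := by omega
    have h3 : c - n = 0 := by omega
    rw [h1, h2, h3]
    have e1 : ∀ m : ℕ, Finset.Icc 0 m = Finset.range (m + 1) := by
      intro m; ext x; simp [Nat.lt_succ_iff]
    rw [e1, e1]
    rw [Finset.sum_range_succ' (fun j => Nat.choose (c + 1) j) (n + 1)]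
    rw [Finset.sum_range_succ' (fun j => Nat.choose c j) (n + 1)]
    simp only [Nat.choose_succ_succ, Nat.choose_zero_right, Nat.succ_eq_add_one]
    rw [Finset.sum_add_distrib]
    omega
  · -- c ≥ n + 1
    obtain ⟨e, he⟩ : ∃ e, c - n = e + 1 := ⟨c - n - 1, by omega⟩
    have h1 : c + 1 - (n + 1) = e + 1 := by omega
    have h2 : c - (n + 1) = e := by omega
    rw [h1, h2, he]
    have hen : e + 1 ≤ n + 1 := by omega
    have hmap : Finset.Icc (e + 1) (n + 1) = (Finset.Icc e n).map (addRightEmbedding 1) := by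
      rw [map_add_right_Icc]
    rw [hmap, Finset.sum_map]
    simp only [addRightEmbedding_apply]
    simp only [Nat.choose_succ_succ, Nat.succ_eq_add_one]
    rw [Finset.sum_add_distrib]
    -- now: ∑_{Icc e n} C(c,k) + ∑_{Icc e n} C(c,k+1)
    --    = ∑_{Icc e (n+1)} C(c,j) + ∑_{Icc (e+1) n} C(c,j)
    have hA : ∑ j ∈ Finset.Icc e (n + 1), Nat.choose c j
        = (∑ j ∈ Finset.Icc e n, Nat.choose c j) + Nat.choose c (n + 1) :=
      Finset.sum_Icc_succ_top (by omega) _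
    have hB : ∑ k ∈ Finset.Icc e n, Nat.choose c (k + 1)
        = (∑ j ∈ Finset.Icc (e + 1) n, Nat.choose c j) + Nat.choose c (n + 1) := by
      have : ∑ k ∈ Finset.Icc e n, Nat.choose c (k + 1)
          = ∑ j ∈ Finset.Icc (e + 1) (n + 1), Nat.choose c j := by
        rw [hmap, Finset.sum_map]
        simp [addRightEmbedding_apply]
      rw [this]
      exact Finset.sum_Icc_succ_top (by omega) _
    omega

lemma ssS_sum (n m : ℕ) (hm : m ≤ 2 * n + 1) :
    ∑ a ∈ Finset.range (m + 1), ssS n (a - 1) = ssS (n + 1) m := by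
  induction m with
  | zero =>
    rw [Finset.sum_range_one]
    simp [ssS_zero]
  | succ m ih =>
    rw [Finset.sum_range_succ, ih (by omega), Nat.add_sub_cancel,
      ssS_step n m (by omega)]

lemma ssS_top (n : ℕ) : ssS (n + 1) (2 * n + 2) = ssS (n + 1) (2 * n + 1) := by
  unfold ssS
  have h1 : 2 * n + 2 - (n + 1) = n + 1 := by omega
  have h2 : 2 * n + 1 - (n + 1) = n := by omega
  rw [h1, h2, Finset.Icc_self, Finset.sum_singleton,
    Finset.sum_Icc_succ_top (by omega), Finset.Icc_self, Finset.sum_singleton]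
  exact Nat.choose_succ_succ (2 * n + 1) n

/-- The diagram predicate with a global cap `c` on all entries. -/
def ssDP (n c : ℕ) (lam : Fin n → ℕ) : Prop :=
  (∀ i : Fin n, lam i ≤ 2 * n - 2 * (i : ℕ) - 1) ∧
  (∀ i j : Fin n, i < j → 0 < lam j → lam j < lam i) ∧
  (∀ i, lam i ≤ c)

noncomputable instance ssFintype (n c : ℕ) : Fintype {lam : Fin n → ℕ // ssDP n c lam} := by
  apply Fintype.ofInjective
    (fun x (i : Fin n) => (⟨x.1 i, by have := x.2.2.2 i; omega⟩ : Fin (c + 1)))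
  intro x y hxy
  apply Subtype.ext
  funext i
  have := congrFun hxy i
  exact congrArg Fin.val this

/-- Peeling off the first row. -/
noncomputable def ssEquiv (n c : ℕ) :
    {lam : Fin (n + 1) → ℕ // ssDP (n + 1) c lam} ≃
      Σ a : Fin (min c (2 * n + 1) + 1), {lam : Fin n → ℕ // ssDP n ((a : ℕ) - 1) lam} where
  toFun x := by
    refine ⟨⟨x.1 0, ?_⟩, ⟨Fin.tail x.1, ?_, ?_, ?_⟩⟩
    · have h1 := x.2.2.2 0
      have h2 := x.2.1 0
      simp only [Fin.val_zero] at h2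
      omega
    · intro i
      have h := x.2.1 i.succ
      simp only [Fin.val_succ] at h
      simpa [Fin.tail] using (by omega : x.1 i.succ ≤ 2 * n - 2 * (i : ℕ) - 1)
    · intro i j hij hpos
      exact x.2.2.1 i.succ j.succ (by simpa using hij) hpos
    · intro i
      by_cases hp : 0 < x.1 i.succ
      · have := x.2.2.1 0 i.succ (Fin.succ_pos i) hp
        simp only [Fin.tail]
        omega
      · simp only [Fin.tail]
        omega
  invFun p := by
    refine ⟨Fin.cons (p.1 : ℕ) p.2.1, ?_, ?_, ?_⟩
    · intro i
      induction i using Fin.cases with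
      | zero =>
        have := p.1.isLt
        have : (p.1 : ℕ) ≤ min c (2 * n + 1) := by omega
        simp only [Fin.cons_zero, Fin.val_zero]
        omega
      | succ i =>
        have := p.2.2.1 i
        simp only [Fin.cons_succ, Fin.val_succ]
        omega
    · intro i j hij hpos
      induction j using Fin.cases with
      | zero => exact absurd hij (Fin.not_lt_zero i).elim
      | succ j =>
        induction i using Fin.cases with
        | zero =>
          have hle := p.2.2.2.2 j
          simp only [Fin.cons_succ] at hpos ⊢
          simp only [Fin.cons_zero]
          omega
        | succ i =>
          simp only [Fin.cons_succ] at hpos ⊢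
          exact p.2.2.2.1 i j (by simpa using hij) hpos
    · intro i
      induction i using Fin.cases with
      | zero =>
        have := p.1.isLt
        have : (p.1 : ℕ) ≤ min c (2 * n + 1) := by omega
        simp only [Fin.cons_zero]
        omega
      | succ i =>
        have h1 := p.2.2.2.2 i
        have h2 := p.1.isLt
        have : (p.1 : ℕ) ≤ min c (2 * n + 1) := by omega
        simp only [Fin.cons_succ]
        omega
  left_inv x := by
    apply Subtype.ext
    exact Fin.cons_self_tail x.1
  right_inv p := by
    refine Sigma.ext ?_ ?_
    · apply Fin.ext
      simp
    · exact heq_of_eq (Subtype.ext (by funext i; simp [Fin.tail]))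

lemma ssCard (n : ℕ) : ∀ c, c ≤ 2 * n → Nat.card {lam : Fin n → ℕ // ssDP n c lam} = ssS n c := by
  induction n with
  | zero =>
    intro c hc
    have hc0 : c = 0 := by omega
    subst hc0
    have : Nat.card {lam : Fin 0 → ℕ // ssDP 0 0 lam} = 1 := by
      haveI : Nonempty {lam : Fin 0 → ℕ // ssDP 0 0 lam} :=
        ⟨⟨fun i => i.elim0, by exact ⟨fun i => i.elim0, fun i => i.elim0, fun i => i.elim0⟩⟩⟩
      haveI : Subsingleton {lam : Fin 0 → ℕ // ssDP 0 0 lam} := by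
        constructor
        intro x y
        apply Subtype.ext
        funext i
        exact i.elim0
      exact Nat.card_unique
    rw [this, ssS_zero]
  | succ n ih =>
    intro c hc
    rw [Nat.card_congr (ssEquiv n c), Nat.card_eq_fintype_card, Fintype.card_sigma]
    simp only [← Nat.card_eq_fintype_card]
    have hterm : ∀ a : Fin (min c (2 * n + 1) + 1),
        Nat.card {lam : Fin n → ℕ // ssDP n ((a : ℕ) - 1) lam} = ssS n ((a : ℕ) - 1) := by
      intro a
      apply ih
      have := a.isLt
      omega
    simp only [hterm]
    rw [Fin.sum_univ_eq_sum_range (fun a => ssS n (a - 1)) (min c (2 * n + 1) + 1)]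
    rw [ssS_sum n (min c (2 * n + 1)) (by omega)]
    rcases le_or_gt c (2 * n + 1) with h | h
    · rw [Nat.min_eq_left h]
    · have hce : c = 2 * n + 2 := by omega
      subst hce
      rw [Nat.min_eq_right (by omega)]
      exact (ssS_top n).symm

lemma ssS_final (n : ℕ) : ssS n (2 * n - 1) = Nat.choose (2 * n) n := by
  match n with
  | 0 => simp [ssS]
  | (k + 1) =>
    unfold ssS
    have h1 : 2 * (k + 1) - 1 = 2 * k + 1 := by omega
    have h2 : 2 * k + 1 - (k + 1) = k := by omega
    rw [h1, h2, Finset.sum_Icc_succ_top (by omega), Finset.Icc_self, Finset.sum_singleton]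
    have h3 : 2 * (k + 1) = (2 * k + 1) + 1 := by omega
    rw [h3]
    exact (Nat.choose_succ_succ (2 * k + 1) k).symm

/-- The number of shifted Ferrers diagrams contained in the shifted staircase
`(2n−1, 2n−3, …, 1)` equals `C(2n, n)`. Such a diagram is encoded by its row lengths
`lam : Fin n → ℕ` (with trailing zeros allowed): the sequence is strictly decreasing
as long as the entries are positive, and the `i`-th row (0-indexed) has length at most
`2n − 2i − 1`. -/
theorem shifted_staircase_card (n : ℕ) :
    Nat.card {lam : Fin n → ℕ //
        (∀ i : Fin n, lam i ≤ 2 * n - 2 * (i : ℕ) - 1) ∧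
        (∀ i j : Fin n, i < j → 0 < lam j → lam j < lam i)}
      = Nat.choose (2 * n) n := by
  have e : {lam : Fin n → ℕ //
        (∀ i : Fin n, lam i ≤ 2 * n - 2 * (i : ℕ) - 1) ∧
        (∀ i j : Fin n, i < j → 0 < lam j → lam j < lam i)} ≃
      {lam : Fin n → ℕ // ssDP n (2 * n - 1) lam} := by
    apply Equiv.subtypeEquivRight
    intro lam
    constructor
    · rintro ⟨h1, h2⟩
      exact ⟨h1, h2, fun i => by have := h1 i; omega⟩
    · rintro ⟨h1, h2, h3⟩
      exact ⟨h1, h2⟩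
  rw [Nat.card_congr e, ssCard n (2 * n - 1) (by omega), ssS_final]
end

section
/- In type A_n, the ad-nilpotent ideals of a Borel subalgebra are in bijection with Ferrers diagrams (partitions) contained in the staircase (n, n−1, …, 1); in particular, their total number is the Catalan number C(2n+2, n+1)/(n+2). -/
open Nat

/-- Weakly increasing sequences `c : ℕ → ℕ` (on `[0, m)`) with `c i ≤ i`, padded with `0`
beyond `m`. These are counted by the Catalan number `catalan m`. -/
def StairSeq (m : ℕ) : Type :=
  {c : ℕ → ℕ // (∀ ⦃i j : ℕ⦄, i ≤ j → j < m → c i ≤ c j) ∧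
    (∀ i, i < m → c i ≤ i) ∧ (∀ i, m ≤ i → c i = 0)}

lemma StairSeq.zero_val {m : ℕ} (c : StairSeq m) : c.1 0 = 0 := by
  rcases Nat.eq_zero_or_pos m with h | h
  · exact c.2.2.2 0 (by omega)
  · exact Nat.le_zero.mp (c.2.2.1 0 h)

instance stairSeqFinite (m : ℕ) : Finite (StairSeq m) := by
  apply Finite.of_injective
    (fun c : StairSeq m => (fun i : Fin m => (⟨c.1 i, lt_of_le_of_lt (c.2.2.1 i i.2) i.2⟩ : Fin m)))
  intro c d h
  apply Subtype.ext; funext i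
  rcases lt_or_ge i m with hi | hi
  · exact congrArg Fin.val (congrFun h ⟨i, hi⟩)
  · rw [c.2.2.2 i hi, d.2.2.2 i hi]

/-- The largest `k ≤ m` with `c k = k` ("last diagonal touch"). -/
def stairDiag {m : ℕ} (c : StairSeq (m + 1)) : ℕ :=
  Nat.findGreatest (fun i => c.1 i = i) m

lemma stairDiag_le {m : ℕ} (c : StairSeq (m + 1)) : stairDiag c ≤ m :=
  Nat.findGreatest_le m

lemma stairDiag_eq_iff {m : ℕ} (c : StairSeq (m + 1)) {k : ℕ} :
    stairDiag c = k ↔ k ≤ m ∧ (k ≠ 0 → c.1 k = k) ∧ ∀ ⦃i⦄, k < i → i ≤ m → ¬ c.1 i = i := by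
  unfold stairDiag
  exact Nat.findGreatest_eq_iff

lemma stairDiag_spec {m : ℕ} (c : StairSeq (m + 1)) : c.1 (stairDiag c) = stairDiag c := by
  rcases Nat.eq_zero_or_pos (stairDiag c) with h | h
  · rw [h]; exact c.zero_val
  · exact ((stairDiag_eq_iff c).mp rfl).2.1 (by omega)

lemma stairDiag_lt' {m : ℕ} (c : StairSeq (m + 1)) {i : ℕ} (h1 : stairDiag c < i) (h2 : i ≤ m) :
    c.1 i < i :=
  lt_of_le_of_ne (c.2.2.1 i (by omega)) (((stairDiag_eq_iff c).mp rfl).2.2 h1 h2)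

/-- First-return style decomposition: sequences in `StairSeq (m+1)` whose last diagonal touch is
at `k` correspond to pairs in `StairSeq k × StairSeq (m - k)`. -/
def fiberEquiv (m k : ℕ) (hk : k ≤ m) :
    {c : StairSeq (m + 1) // stairDiag c = k} ≃ StairSeq k × StairSeq (m - k) where
  toFun c :=
    (⟨fun i => if i < k then c.1.1 i else 0, by
        intro i j hij hj
        dsimp only
        rw [if_pos (lt_of_le_of_lt hij hj), if_pos hj]
        exact c.1.2.1 hij (by omega), by
        intro i hi; dsimp only; rw [if_pos hi]; exact c.1.2.2.1 i (by omega), by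
        intro i hi; dsimp only; rw [if_neg (by omega)]⟩,
     ⟨fun j => if j < m - k then c.1.1 (k + 1 + j) - k else 0, by
        intro i j hij hj
        dsimp only
        rw [if_pos (lt_of_le_of_lt hij hj), if_pos hj]
        exact Nat.sub_le_sub_right (c.1.2.1 (by omega) (by omega)) k, by
        intro j hj; dsimp only; rw [if_pos hj]
        have hdk := c.2
        have := stairDiag_lt' c.1 (i := k + 1 + j) (by omega) (by omega)
        omega, by
        intro j hj; dsimp only; rw [if_neg (by omega)]⟩)
  invFun ab :=
    ⟨⟨fun i => if i < k then ab.1.1 i else if i ≤ m then ab.2.1 (i - (k + 1)) + k else 0, by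
        -- monotone
        intro i j hij hj
        dsimp only
        rcases lt_or_ge j k with hjk | hjk
        · rw [if_pos (lt_of_le_of_lt hij hjk), if_pos hjk]
          exact ab.1.2.1 hij hjk
        · rw [if_neg (show ¬ j < k by omega), if_pos (show j ≤ m by omega)]
          rcases lt_or_ge i k with hik | hik
          · rw [if_pos hik]
            have := ab.1.2.2.1 i hik
            omega
          · rw [if_neg (show ¬ i < k by omega), if_pos (show i ≤ m by omega)]
            have hmono : ab.2.1 (i - (k + 1)) ≤ ab.2.1 (j - (k + 1)) := by
              rcases lt_or_ge (j - (k + 1)) (m - k) with h | h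
              · exact ab.2.2.1 (by omega) h
              · have h' : i - (k + 1) = j - (k + 1) ∨ (m - k) ≤ i - (k + 1) := by omega
                rcases h' with h' | h'
                · rw [h']
                · rw [ab.2.2.2.2 _ h', ab.2.2.2.2 _ h]
            omega
        , by
        -- bound
        have hb0 : ab.2.1 0 = 0 := ab.2.zero_val
        intro i hi
        dsimp only
        rcases lt_or_ge i k with hik | hik
        · rw [if_pos hik]; exact ab.1.2.2.1 i hik
        · rw [if_neg (by omega), if_pos (by omega)]
          rcases Nat.eq_or_lt_of_le hik with h | h
          · subst h
            rw [Nat.sub_eq_zero_of_le (Nat.le_succ k), hb0]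
            omega
          · rcases lt_or_ge (i - (k + 1)) (m - k) with h' | h'
            · have := ab.2.2.2.1 (i - (k + 1)) h'
              omega
            · rw [ab.2.2.2.2 _ h']
              omega
        , by
        intro i hi
        dsimp only
        rw [if_neg (by omega), if_neg (by omega)]⟩, by
      -- the diagonal statistic of the glued sequence is k
      have hb0 : ab.2.1 0 = 0 := ab.2.zero_val
      apply (stairDiag_eq_iff _).mpr
      refine ⟨hk, fun _ => ?_, fun i hi1 hi2 => ?_⟩
      · dsimp only
        rw [if_neg (lt_irrefl k), if_pos hk, Nat.sub_eq_zero_of_le (Nat.le_succ k), hb0]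
        omega
      · dsimp only
        rw [if_neg (by omega), if_pos hi2]
        rcases lt_or_ge (i - (k + 1)) (m - k) with h | h
        · have := ab.2.2.2.1 (i - (k + 1)) h
          omega
        · rw [ab.2.2.2.2 _ h]
          omega⟩
  left_inv c := by
    apply Subtype.ext; apply Subtype.ext; funext i
    have hdk : stairDiag c.1 = k := c.2
    have hspec : c.1.1 k = k := by
      have h := stairDiag_spec c.1
      rw [hdk] at h
      exact h
    dsimp only
    rcases lt_or_ge i k with hik | hik
    · rw [if_pos hik, if_pos hik]
    · rw [if_neg (by omega)]
      rcases le_or_gt i m with him | him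
      · rw [if_pos him]
        rcases Nat.eq_or_lt_of_le hik with h | h
        · subst h
          rw [Nat.sub_eq_zero_of_le (Nat.le_succ k)]
          rcases lt_or_ge 0 (m - k) with h' | h'
          · rw [if_pos h']
            have := stairDiag_lt' c.1 (i := k + 1 + 0) (by omega) (by omega)
            omega
          · rw [if_neg (by omega)]
            omega
        · rw [if_pos (by omega)]
          have h1 : k + 1 + (i - (k + 1)) = i := by omega
          rw [h1]
          have h2 : k ≤ c.1.1 i := by
            calc k = c.1.1 k := hspec.symm
            _ ≤ c.1.1 i := c.1.2.1 (by omega) (by omega)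
          omega
      · rw [if_neg (by omega), c.1.2.2.2 i (by omega)]
  right_inv ab := by
    obtain ⟨a, b⟩ := ab
    have hb0 : b.1 0 = 0 := b.zero_val
    refine Prod.ext ?_ ?_
    · apply Subtype.ext; funext i
      dsimp only
      rcases lt_or_ge i k with hik | hik
      · rw [if_pos hik, if_pos hik]
      · rw [if_neg (by omega), (a.2.2.2 i hik)]
    · apply Subtype.ext; funext j
      dsimp only
      rcases lt_or_ge j (m - k) with hj | hj
      · rw [if_pos hj, if_neg (by omega), if_pos (by omega)]
        have h1 : k + 1 + j - (k + 1) = j := by omega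
        rw [h1]
        omega
      · rw [if_neg (by omega), (b.2.2.2 j hj)]

lemma natCard_sigma {ι : Type*} [Fintype ι] (α : ι → Type*) [∀ i, Finite (α i)] :
    Nat.card (Σ i, α i) = ∑ i, Nat.card (α i) := by
  letI : ∀ i, Fintype (α i) := fun i => Fintype.ofFinite _
  simp [Nat.card_eq_fintype_card]

theorem stairSeq_card (m : ℕ) : Nat.card (StairSeq m) = catalan m := by
  induction m using Nat.strong_induction_on with
  | _ m ih =>
    match m with
    | 0 =>
      rw [catalan_zero]
      have h1 : Nonempty (StairSeq 0) :=
        ⟨⟨fun _ => 0, fun _ _ _ h => absurd h (by omega), fun i h => absurd h (by omega),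
          fun _ _ => rfl⟩⟩
      have h2 : Subsingleton (StairSeq 0) := by
        constructor
        intro a b
        apply Subtype.ext; funext i
        rw [a.2.2.2 i (Nat.zero_le i), b.2.2.2 i (Nat.zero_le i)]
      exact Nat.card_unique
    | (m + 1) =>
      have e1 : StairSeq (m + 1) ≃
          Σ k : Fin (m + 1), {c : StairSeq (m + 1) //
            (⟨stairDiag c, Nat.lt_succ_of_le (stairDiag_le c)⟩ : Fin (m + 1)) = k} :=
        (Equiv.sigmaFiberEquiv _).symm
      rw [Nat.card_congr e1, natCard_sigma, catalan_succ]
      apply Finset.sum_congr rfl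
      intro k _
      have e2 : {c : StairSeq (m + 1) //
            (⟨stairDiag c, Nat.lt_succ_of_le (stairDiag_le c)⟩ : Fin (m + 1)) = k} ≃
          StairSeq (k : ℕ) × StairSeq (m - (k : ℕ)) := by
        refine Equiv.trans (Equiv.subtypeEquivRight fun c => ?_) (fiberEquiv m k k.is_le)
        constructor
        · intro h; exact congrArg Fin.val h
        · intro h; exact Fin.ext h
      rw [Nat.card_congr e2, Nat.card_prod, ih k (by omega), ih (m - k) (by omega)]

/-- The staircase partitions of the theorem correspond to `StairSeq (n+1)` by reversal. -/
def lamEquiv (n : ℕ) :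
    {lam : Fin n → ℕ //
        (∀ i j : Fin n, i ≤ j → lam j ≤ lam i) ∧
        (∀ i : Fin n, lam i ≤ n - (i : ℕ))} ≃ StairSeq (n + 1) where
  toFun lam :=
    ⟨fun i => if h : 1 ≤ i ∧ i ≤ n then lam.1 ⟨n - i, by omega⟩ else 0, by
      intro i j hij hj
      dsimp only
      by_cases hi : 1 ≤ i ∧ i ≤ n
      · rw [dif_pos hi, dif_pos (⟨by omega, by omega⟩ : 1 ≤ j ∧ j ≤ n)]
        exact lam.2.1 ⟨n - j, by omega⟩ ⟨n - i, by omega⟩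
          (show n - j ≤ n - i by omega)
      · rw [dif_neg hi]; exact Nat.zero_le _, by
      intro i hi
      dsimp only
      by_cases h : 1 ≤ i ∧ i ≤ n
      · rw [dif_pos h]
        have h2 := lam.2.2 ⟨n - i, by omega⟩
        have h3 : ((⟨n - i, by omega⟩ : Fin n) : ℕ) = n - i := rfl
        rw [h3] at h2
        exact le_trans h2 (by omega)
      · rw [dif_neg h]; exact Nat.zero_le _, by
      intro i hi; dsimp only; rw [dif_neg (by omega)]⟩
  invFun c :=
    ⟨fun i => c.1 (n - i), by
      constructor
      · intro i j hij
        have hi := i.isLt; have hj := j.isLt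
        have hij' : (i : ℕ) ≤ (j : ℕ) := hij
        exact c.2.1 (show n - (j : ℕ) ≤ n - (i : ℕ) by omega) (by omega)
      · intro i
        have hi := i.isLt
        exact c.2.2.1 (n - i) (by omega)⟩
  left_inv lam := by
    apply Subtype.ext; funext i
    have hi := i.isLt
    dsimp only
    rw [dif_pos (⟨by omega, by omega⟩ : 1 ≤ n - (i : ℕ) ∧ n - (i : ℕ) ≤ n)]
    have h4 : (⟨n - (n - (i : ℕ)), by omega⟩ : Fin n) = i :=
      Fin.ext (show n - (n - (i : ℕ)) = (i : ℕ) by omega)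
    exact congrArg lam.1 h4
  right_inv c := by
    apply Subtype.ext; funext i
    dsimp only
    by_cases h : 1 ≤ i ∧ i ≤ n
    · rw [dif_pos h]
      show c.1 (n - (n - i)) = c.1 i
      have h1 : n - (n - i) = i := by omega
      rw [h1]
    · rw [dif_neg h]
      rcases Nat.eq_zero_or_pos i with h0 | h0
      · subst h0; exact c.zero_val.symm
      · exact (c.2.2.2 i (by omega)).symm

/-- In type `Aₙ`, the ad-nilpotent ideals of a Borel subalgebra are in bijection with
partitions contained in the staircase `(n, n−1, …, 1)`; in particular their number is the
Catalan number `C(2n+2, n+1)/(n+2)`. We formalize: the number of weakly decreasing sequences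
`lam : Fin n → ℕ` with `lam i ≤ n − i` (0-indexed, i.e. `λ_i ≤ n+1−i` 1-indexed)
equals `(1/(n+2))·C(2n+2, n+1)`. -/
theorem staircase_partitions_card (n : ℕ) :
    Nat.card {lam : Fin n → ℕ //
        (∀ i j : Fin n, i ≤ j → lam j ≤ lam i) ∧
        (∀ i : Fin n, lam i ≤ n - (i : ℕ))}
      = Nat.choose (2 * n + 2) (n + 1) / (n + 2) := by
  rw [Nat.card_congr (lamEquiv n), stairSeq_card, catalan_eq_centralBinom_div]
  simp only [Nat.centralBinom]
  have h : 2 * (n + 1) = 2 * n + 2 := by ring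
  rw [h]
end

section
/- The number of lattice paths of length 2n with steps (1,1) and (1,−1), starting at the origin, never passing below the x-axis, and with maximum height at most h, equals Σ_{s=0}^{⌊h/2⌋} Σ_{k∈ℤ} ((1 + 2s + 2k(h+2))/(2n+1)) · C(2n+1, n − s − k(h+2)). -/
/-!
Sort the strip paths by their endpoint `y`. The counts `c(m, y)` satisfy
`c(m+1, y) = c(m, y-1) + c(m, y+1)` for `0 ≤ y ≤ h`, vanish on the walls `y = -1` and `y = h + 1`,
and start from `c(0, y) = [y = 0]`. By the reflection principle, the signed count
`Σ_k N(m, y + 2k(h+2)) - N(m, -y-2 + 2k(h+2))` of free walks (`N(m, x)` of them end at `x`)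
obeys the same recursion, vanishes on both walls and has the same initial values, so the two
agree. Odd endpoints contribute nothing, and for `y = 2s` the ballot-number identity
`C(2n, j) - C(2n, j-1) = (2n+1-2j)/(2n+1) · C(2n+1, j)` turns each term into the stated one.
-/

/-- The height of the walk `p` after `k` steps (up-steps `true ↦ +1`, down-steps
`false ↦ −1`). -/
def pathHeight {m : ℕ} (p : Fin m → Bool) (k : ℕ) : ℤ :=
  ∑ i ∈ Finset.univ.filter (fun i : Fin m => (i : ℕ) < k),
    (if p i then (1 : ℤ) else -1)

/-- Binomial coefficient `C(m, j)` with integer lower index, zero when `j < 0`. -/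
def intChoose (m : ℕ) (j : ℤ) : ℕ :=
  if 0 ≤ j then m.choose j.toNat else 0

namespace BallotHeight

open Finset Function

section intChoose

@[simp] lemma intChoose_natCast (m t : ℕ) : intChoose m t = m.choose t := by
  simp [intChoose]

lemma intChoose_of_neg {m : ℕ} {j : ℤ} (hj : j < 0) : intChoose m j = 0 := by
  simp [intChoose, not_le.2 hj]

lemma intChoose_zero_left (j : ℤ) : intChoose 0 j = if j = 0 then 1 else 0 := by
  rcases lt_or_ge j 0 with hj | hj
  · rw [intChoose_of_neg hj, if_neg hj.ne]
  · lift j to ℕ using hj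
    rw [intChoose_natCast]
    cases j <;> simp [Nat.cast_add_one_ne_zero]

lemma intChoose_succ (m : ℕ) (j : ℤ) :
    intChoose (m + 1) j = intChoose m j + intChoose m (j - 1) := by
  rcases lt_or_ge j 0 with hj | hj
  · simp [intChoose_of_neg, hj, show j - 1 < 0 by omega]
  lift j to ℕ using hj
  cases j with
  | zero => simp [intChoose]
  | succ t =>
    rw [Nat.cast_succ, add_sub_cancel_right, ← Nat.cast_succ, intChoose_natCast,
      intChoose_natCast, intChoose_natCast, Nat.choose_succ_succ', add_comm]

lemma mul_intChoose_succ (m : ℕ) (j : ℤ) :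
    j * intChoose (m + 1) j = (m + 1) * intChoose m (j - 1) := by
  rcases lt_or_ge j 0 with hj | hj
  · simp [intChoose_of_neg, hj, show j - 1 < 0 by omega]
  lift j to ℕ using hj
  cases j with
  | zero => simp [intChoose_of_neg]
  | succ t =>
    rw [Nat.cast_succ, add_sub_cancel_right, ← Nat.cast_succ, intChoose_natCast,
      intChoose_natCast]
    exact_mod_cast by rw [mul_comm]; exact (Nat.add_one_mul_choose_eq m t).symm

lemma intChoose_sub_intChoose_sub_one (m : ℕ) (j : ℤ) :
    (intChoose m j : ℚ) - intChoose m (j - 1)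
      = (m + 1 - 2 * j) / (m + 1) * intChoose (m + 1) j := by
  have hpascal : (intChoose (m + 1) j : ℚ) = intChoose m j + intChoose m (j - 1) := by
    exact_mod_cast intChoose_succ m j
  have habsorb : (j : ℚ) * intChoose (m + 1) j = (m + 1) * intChoose m (j - 1) := by
    exact_mod_cast mul_intChoose_succ m j
  rw [div_mul_eq_mul_div, eq_div_iff (by positivity)]
  linear_combination (-(m + 1) : ℚ) * hpascal + 2 * habsorb

end intChoose

def walkCount : ℕ → ℤ → ℕ
  | 0, y => if y = 0 then 1 else 0
  | m + 1, y => walkCount m (y - 1) + walkCount m (y + 1)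

section walkCount

lemma walkCount_neg (m : ℕ) (y : ℤ) : walkCount m (-y) = walkCount m y := by
  induction m generalizing y with
  | zero => simp [walkCount]
  | succ m ih =>
    rw [walkCount, walkCount, show -y - 1 = -(y + 1) by ring, show -y + 1 = -(y - 1) by ring,
      ih, ih, add_comm]

lemma walkCount_eq_zero_of_lt_natAbs {m : ℕ} {y : ℤ} (hy : m < y.natAbs) :
    walkCount m y = 0 := by
  induction m generalizing y with
  | zero => simp [walkCount]; omega
  | succ m ih => rw [walkCount, ih (by omega), ih (by omega)]

lemma walkCount_eq_zero_of_odd {m : ℕ} {y : ℤ} (hy : Odd (m + y)) : walkCount m y = 0 := by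
  rw [Int.odd_iff] at hy
  induction m generalizing y with
  | zero => simp [walkCount]; omega
  | succ m ih => rw [walkCount, ih (by omega), ih (by omega)]

lemma walkCount_two_mul_sub (m : ℕ) (j : ℤ) : walkCount m (2 * j - m) = intChoose m j := by
  induction m generalizing j with
  | zero => simp [walkCount, intChoose_zero_left]
  | succ m ih =>
    rw [walkCount, show 2 * j - ↑(m + 1) - 1 = 2 * (j - 1) - m by push_cast; ring,
      show 2 * j - ↑(m + 1) + 1 = 2 * j - m by push_cast; ring, ih, ih, intChoose_succ, add_comm]

lemma finite_support_walkCount_affine (m : ℕ) (x : ℤ) {c : ℤ} (hc : c ≠ 0) :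
    (support fun k : ℤ => (walkCount m (x + k * c) : ℚ)).Finite := by
  have hfin : (support (walkCount m)).Finite :=
    (Set.finite_Icc (-(m : ℤ)) m).subset fun y hy => by
      by_contra hy'
      exact hy (walkCount_eq_zero_of_lt_natAbs (by simp only [Set.mem_Icc] at hy'; omega))
  have hinj : Injective fun k : ℤ => x + k * c :=
    (add_right_injective x).comp (mul_left_injective₀ hc)
  simpa only [support, Nat.cast_ne_zero, Set.preimage_ofPred_eq] using hfin.preimage hinj.injOn

end walkCount

/-- The number of length-`m` walks on the cycle `ℤ / cℤ` from `0` to `x mod c`. -/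
noncomputable def cyclicWalkCount (c : ℤ) (m : ℕ) (x : ℤ) : ℚ :=
  ∑ᶠ k : ℤ, (walkCount m (x + k * c) : ℚ)

section cyclicWalkCount

variable {c : ℤ}

lemma cyclicWalkCount_succ (hc : c ≠ 0) (m : ℕ) (x : ℤ) :
    cyclicWalkCount c (m + 1) x = cyclicWalkCount c m (x - 1) + cyclicWalkCount c m (x + 1) := by
  unfold cyclicWalkCount
  rw [← finsum_add_distrib (finite_support_walkCount_affine m _ hc)
    (finite_support_walkCount_affine m _ hc)]
  refine finsum_congr fun k => ?_
  rw [walkCount, Nat.cast_add, sub_add_eq_add_sub, add_right_comm]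

lemma cyclicWalkCount_add_period (m : ℕ) (x : ℤ) :
    cyclicWalkCount c m (x + c) = cyclicWalkCount c m x := by
  unfold cyclicWalkCount
  conv_rhs => rw [← finsum_comp_equiv (Equiv.addRight 1)]
  refine finsum_congr fun k => ?_
  rw [Equiv.coe_addRight]
  congr 2
  ring

lemma cyclicWalkCount_neg (m : ℕ) (x : ℤ) :
    cyclicWalkCount c m (-x) = cyclicWalkCount c m x := by
  unfold cyclicWalkCount
  conv_rhs => rw [← finsum_comp_equiv (Equiv.neg ℤ)]
  refine finsum_congr fun k => ?_
  rw [Equiv.neg_apply, ← walkCount_neg]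
  congr 2
  ring

lemma cyclicWalkCount_zero_of_not_dvd {x : ℤ} (hx : ¬c ∣ x) : cyclicWalkCount c 0 x = 0 := by
  refine finsum_eq_zero_of_forall_eq_zero fun k => ?_
  have : x + k * c ≠ 0 := fun h => hx ⟨-k, by linear_combination h⟩
  simp [walkCount, this]

lemma cyclicWalkCount_zero_zero (hc : c ≠ 0) : cyclicWalkCount c 0 0 = 1 := by
  rw [cyclicWalkCount, finsum_eq_single _ 0 fun k hk => by simp [walkCount, hk, hc]]
  simp [walkCount]

lemma cyclicWalkCount_of_odd (hc : Even c) {m : ℕ} {x : ℤ} (hx : Odd (m + x)) :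
    cyclicWalkCount c m x = 0 := by
  refine finsum_eq_zero_of_forall_eq_zero fun k => ?_
  rw [walkCount_eq_zero_of_odd (by rw [← add_assoc]; exact hx.add_even (hc.mul_left k)),
    Nat.cast_zero]

end cyclicWalkCount

/-- The images of `y` under the group generated by the reflections in the lines `-1` and
`h + 1` are `y + 2k(h+2)`, reached by an even number of reflections, and `-y-2 + 2k(h+2)`,
reached by an odd number. -/
noncomputable def reflectedWalkCount (h m : ℕ) (y : ℤ) : ℚ :=
  cyclicWalkCount (2 * (h + 2)) m y - cyclicWalkCount (2 * (h + 2)) m (-y - 2)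

section reflectedWalkCount

variable (h : ℕ)

lemma reflectedWalkCount_succ (m : ℕ) (y : ℤ) :
    reflectedWalkCount h (m + 1) y
      = reflectedWalkCount h m (y - 1) + reflectedWalkCount h m (y + 1) := by
  have hc : 2 * ((h : ℤ) + 2) ≠ 0 := by omega
  rw [reflectedWalkCount, cyclicWalkCount_succ hc, cyclicWalkCount_succ hc,
    show -y - 2 - 1 = -(y + 1) - 2 by ring, show -y - 2 + 1 = -(y - 1) - 2 by ring,
    reflectedWalkCount, reflectedWalkCount]
  ring

lemma reflectedWalkCount_of_wall (m : ℕ) {y : ℤ} (hy : y = -1 ∨ y = h + 1) :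
    reflectedWalkCount h m y = 0 := by
  obtain rfl | rfl := hy
  · norm_num [reflectedWalkCount]
  · have hperiod := cyclicWalkCount_add_period (c := 2 * (h + 2)) m (-(h + 1) - 2)
    rw [show -((h : ℤ) + 1) - 2 + 2 * (h + 2) = h + 1 by ring] at hperiod
    rw [reflectedWalkCount, ← hperiod, sub_self]

lemma reflectedWalkCount_zero {y : ℤ} (hy0 : 0 ≤ y) (hyh : y ≤ h) :
    reflectedWalkCount h 0 y = if y = 0 then 1 else 0 := by
  have hc : 2 * ((h : ℤ) + 2) ≠ 0 := by omega
  have hndvd : ∀ z : ℤ, 0 < z → z < 2 * (h + 2) → ¬2 * ((h : ℤ) + 2) ∣ z :=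
    fun z hz hzc hd => by
      have := Int.eq_zero_of_abs_lt_dvd hd (by rwa [abs_of_pos hz])
      omega
  have hreflected : cyclicWalkCount (2 * (h + 2)) 0 (-y - 2) = 0 :=
    cyclicWalkCount_zero_of_not_dvd fun hd =>
      hndvd (y + 2) (by omega) (by omega) (by rwa [← dvd_neg, neg_add'])
  rw [reflectedWalkCount, hreflected, sub_zero]
  split_ifs with hy
  · rw [hy, cyclicWalkCount_zero_zero hc]
  · exact cyclicWalkCount_zero_of_not_dvd (hndvd y (by omega) (by omega))

end reflectedWalkCount

section stripWalks

variable {m : ℕ}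

lemma pathHeight_zero (p : Fin m → Bool) : pathHeight p 0 = 0 := by
  simp [pathHeight]

lemma pathHeight_snoc_of_le (q : Fin m → Bool) (b : Bool) {k : ℕ} (hk : k ≤ m) :
    pathHeight (Fin.snoc q b : Fin (m + 1) → Bool) k = pathHeight q k := by
  simp only [pathHeight, sum_filter, Fin.sum_univ_castSucc, Fin.snoc_castSucc, Fin.val_castSucc,
    Fin.val_last, if_neg (by omega : ¬m < k), add_zero]

lemma pathHeight_snoc_succ (q : Fin m → Bool) (b : Bool) :
    pathHeight (Fin.snoc q b : Fin (m + 1) → Bool) (m + 1)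
      = pathHeight q m + if b then 1 else -1 := by
  simp [pathHeight, sum_filter, Fin.sum_univ_castSucc]

lemma card_eq_sum_card_snoc {α : Type*} [Fintype α] [DecidableEq α]
    (S : Finset (Fin (m + 1) → α)) : #S = ∑ a, #{q : Fin m → α | Fin.snoc q a ∈ S} := by
  calc #S = ∑ p, if p ∈ S then 1 else 0 := by rw [← card_filter, filter_univ_mem]
    _ = ∑ x : α × (Fin m → α), if Fin.snoc x.2 x.1 ∈ S then 1 else 0 :=
      (Fintype.sum_equiv (Fin.snocEquiv fun _ => α) _ _ fun _ => rfl).symm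
    _ = _ := by simp only [Fintype.sum_prod_type, card_filter]

variable (h : ℕ)

def stripWalks (m : ℕ) (y : ℤ) : Finset (Fin m → Bool) :=
  {p | (∀ k ≤ m, 0 ≤ pathHeight p k ∧ pathHeight p k ≤ h) ∧ pathHeight p m = y}

lemma snoc_mem_stripWalks_iff {y : ℤ} (hy0 : 0 ≤ y) (hyh : y ≤ h) (q : Fin m → Bool)
    (b : Bool) :
    Fin.snoc q b ∈ stripWalks h (m + 1) y ↔ q ∈ stripWalks h m (y - if b then 1 else -1) := by
  simp only [stripWalks, mem_filter, mem_univ, true_and, pathHeight_snoc_succ]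
  constructor
  · rintro ⟨hstrip, rfl⟩
    refine ⟨fun k hk => ?_, by ring⟩
    rw [← pathHeight_snoc_of_le q b hk]
    exact hstrip k (by omega)
  · rintro ⟨hstrip, hend⟩
    refine ⟨fun k hk => ?_, by rw [hend]; ring⟩
    rcases Nat.lt_or_ge k (m + 1) with hk' | hk'
    · rw [pathHeight_snoc_of_le q b (by omega)]
      exact hstrip k (by omega)
    · rw [show k = m + 1 by omega, pathHeight_snoc_succ, hend]
      exact ⟨by linarith, by linarith⟩

lemma card_stripWalks_of_not_mem {y : ℤ} (hy : ¬(0 ≤ y ∧ y ≤ h)) :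
    #(stripWalks h m y) = 0 := by
  refine card_eq_zero.2 (eq_empty_of_forall_notMem fun p hp => hy ?_)
  simp only [stripWalks, mem_filter, mem_univ, true_and] at hp
  exact hp.2 ▸ hp.1 m le_rfl

lemma card_stripWalks_zero (y : ℤ) : #(stripWalks h 0 y) = if y = 0 then 1 else 0 := by
  split_ifs with hy
  · simp [stripWalks, pathHeight_zero, hy]
  · simp [stripWalks, pathHeight_zero, Ne.symm hy]

lemma card_stripWalks_succ {y : ℤ} (hy0 : 0 ≤ y) (hyh : y ≤ h) :
    #(stripWalks h (m + 1) y) = #(stripWalks h m (y - 1)) + #(stripWalks h m (y + 1)) := by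
  rw [card_eq_sum_card_snoc, Fintype.sum_bool]
  simp only [snoc_mem_stripWalks_iff h hy0 hyh, filter_univ_mem, ↓reduceIte, Bool.false_eq_true,
    sub_neg_eq_add]

lemma card_stripWalks (m : ℕ) {y : ℤ} (hy1 : -1 ≤ y) (hyh : y ≤ h + 1) :
    (#(stripWalks h m y) : ℚ) = reflectedWalkCount h m y := by
  induction m generalizing y with
  | zero =>
    obtain hy | hy : (0 ≤ y ∧ y ≤ h) ∨ (y = -1 ∨ y = h + 1) := by omega
    · rw [card_stripWalks_zero, reflectedWalkCount_zero h hy.1 hy.2, Nat.cast_ite, Nat.cast_one,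
        Nat.cast_zero]
    · rw [card_stripWalks_of_not_mem h (by omega), Nat.cast_zero,
        reflectedWalkCount_of_wall h _ hy]
  | succ m ih =>
    obtain hy | hy : (0 ≤ y ∧ y ≤ h) ∨ (y = -1 ∨ y = h + 1) := by omega
    · rw [card_stripWalks_succ h hy.1 hy.2, reflectedWalkCount_succ, Nat.cast_add,
        ih (by omega) (by omega), ih (by omega) (by omega)]
    · rw [card_stripWalks_of_not_mem h (by omega), Nat.cast_zero,
        reflectedWalkCount_of_wall h _ hy]

lemma natCard_eq_sum_card_stripWalks (m : ℕ) :
    Nat.card {p : Fin m → Bool // ∀ k ≤ m, 0 ≤ pathHeight p k ∧ pathHeight p k ≤ h}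
      = ∑ y ∈ Icc (0 : ℤ) h, #(stripWalks h m y) := by
  rw [Nat.card_eq_fintype_card, Fintype.card_subtype,
    card_eq_sum_card_fiberwise (f := fun p => pathHeight p m) (t := Icc 0 h) fun p hp => ?_]
  · simp only [stripWalks, filter_filter]
  · exact mem_Icc.2 ((mem_filter.1 hp).2 m le_rfl)

end stripWalks

lemma sum_Icc_eq_sum_range_two_mul {M : Type*} [AddCommMonoid M] (g : ℤ → M)
    (hg : ∀ y, Odd y → g y = 0) (h : ℕ) :
    ∑ y ∈ Icc (0 : ℤ) h, g y = ∑ s ∈ range (h / 2 + 1), g (2 * s) := by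
  rw [← sum_image (g := fun s : ℕ => 2 * (s : ℤ)) fun a _ b _ hab => by simpa using hab]
  refine (sum_subset (fun y hy => ?_) fun y hy hy' => hg y ?_).symm
  · obtain ⟨s, hs, rfl⟩ := mem_image.1 hy
    simp only [mem_range] at hs
    simp only [mem_Icc]
    omega
  · simp only [mem_image, mem_range, mem_Icc, not_exists, not_and] at hy hy'
    rw [Int.odd_iff]
    by_contra hodd
    exact hy' (y / 2).toNat (by omega) (by omega)

section evaluation

variable (h : ℕ)

lemma reflectedWalkCount_of_odd {m : ℕ} {y : ℤ} (hy : Odd (m + y)) :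
    reflectedWalkCount h m y = 0 := by
  have hc : Even (2 * ((h : ℤ) + 2)) := even_two_mul _
  rw [reflectedWalkCount, cyclicWalkCount_of_odd hc hy,
    cyclicWalkCount_of_odd hc (by rw [Int.odd_iff] at hy ⊢; omega), sub_zero]

lemma reflectedWalkCount_two_mul (n s : ℕ) :
    reflectedWalkCount h (2 * n) (2 * s) = ∑ᶠ k : ℤ,
      ((1 + 2 * (s : ℚ) + 2 * (k : ℚ) * ((h : ℚ) + 2)) / (2 * (n : ℚ) + 1)) *
        (intChoose (2 * n + 1) ((n : ℤ) - (s : ℤ) - k * ((h : ℤ) + 2)) : ℚ) := by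
  have hc : 2 * ((h : ℤ) + 2) ≠ 0 := by omega
  rw [reflectedWalkCount, show -(2 * (s : ℤ)) - 2 = -(2 * s + 2) by ring, cyclicWalkCount_neg,
    cyclicWalkCount, cyclicWalkCount,
    ← finsum_sub_distrib (finite_support_walkCount_affine _ _ hc)
      (finite_support_walkCount_affine _ _ hc)]
  refine finsum_congr fun k => ?_
  set j : ℤ := n - s - k * (h + 2)
  have hfirst : walkCount (2 * n) (2 * s + k * (2 * (h + 2))) = intChoose (2 * n) j := by
    rw [← walkCount_neg, ← walkCount_two_mul_sub]
    congr 1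
    push_cast
    ring
  have hsecond : walkCount (2 * n) (2 * s + 2 + k * (2 * (h + 2))) = intChoose (2 * n) (j - 1) := by
    rw [← walkCount_neg, ← walkCount_two_mul_sub]
    congr 1
    push_cast
    ring
  rw [hfirst, hsecond, intChoose_sub_intChoose_sub_one]
  congr 1
  push_cast [j]
  ring

end evaluation

end BallotHeight

/-- The number of lattice paths of `2n` steps `(1,1)`, `(1,−1)` starting at the origin,
never passing below the x-axis and of height at most `h`, equals
`Σ_{s=0}^{⌊h/2⌋} Σ_{k∈ℤ} ((1 + 2s + 2k(h+2))/(2n+1)) · C(2n+1, n − s − k(h+2))`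
(the inner sum over `k ∈ ℤ` has finitely many nonzero terms and is taken as a `finsum`). -/
theorem ballot_height_card_formula (n h : ℕ) :
    (Nat.card {p : Fin (2 * n) → Bool //
        ∀ k : ℕ, k ≤ 2 * n → 0 ≤ pathHeight p k ∧ pathHeight p k ≤ (h : ℤ)} : ℚ)
      = ∑ s ∈ Finset.range (h / 2 + 1),
          ∑ᶠ k : ℤ,
            ((1 + 2 * (s : ℚ) + 2 * (k : ℚ) * ((h : ℚ) + 2)) / (2 * (n : ℚ) + 1)) *
              (intChoose (2 * n + 1) ((n : ℤ) - (s : ℤ) - k * ((h : ℤ) + 2)) : ℚ) := by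
  open BallotHeight in
  calc _ = ∑ y ∈ Finset.Icc (0 : ℤ) h, reflectedWalkCount h (2 * n) y := by
        rw [natCard_eq_sum_card_stripWalks, Nat.cast_sum]
        refine Finset.sum_congr rfl fun y hy => ?_
        obtain ⟨hy0, hyh⟩ := Finset.mem_Icc.1 hy
        exact card_stripWalks h (2 * n) (by omega) (by omega)
    _ = ∑ s ∈ Finset.range (h / 2 + 1), reflectedWalkCount h (2 * n) (2 * s) :=
        sum_Icc_eq_sum_range_two_mul _ (fun y hy => reflectedWalkCount_of_odd h
          (by rw [Int.odd_iff] at hy ⊢; push_cast; omega)) h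
    _ = _ := Finset.sum_congr rfl fun s _ => reflectedWalkCount_two_mul h n s
end

section
/- Fix h ≥ 0 and s with 0 ≤ s ≤ h. The generating function Σ_P x^{ℓ(P)/2}, summed over all lattice paths P with steps (1,1) and (1,−1) that start at the origin, stay weakly between heights 0 and h, and end at height s (where ℓ(P) is the number of steps of P), equals Ũ_{h−s} / (√x · Ũ_{h+1}) as a formal identity, where Ũ_k = U_k(1/(2√x)). -/
open Polynomial PowerSeries

/-- The number of lattice paths with `ℓ` steps `(1,1)`, `(1,−1)`, starting at the origin,
staying weakly between heights `0` and `h`, and ending at height `s`. -/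
noncomputable def boundedPathCount (h s ℓ : ℕ) : ℕ :=
  Nat.card {p : Fin ℓ → Bool //
    (∀ k : ℕ, k ≤ ℓ → 0 ≤ pathHeight p k ∧ pathHeight p k ≤ (h : ℤ)) ∧
    pathHeight p ℓ = (s : ℤ)}

/-- The renormalized Chebyshev polynomials of the second kind:
`chebV k = y^k · U_k(1/(2y))`, a polynomial in the variable `y = √x`.
Recursion: `chebV 0 = chebV 1 = 1`, `chebV (k+2) = chebV (k+1) − y² · chebV k`. -/
noncomputable def chebV : ℕ → Polynomial ℤ
  | 0 => 1
  | 1 => 1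
  | (k + 2) => chebV (k + 1) - Polynomial.X ^ 2 * chebV k

/-!
Let `F_s` be the generating function, in `y = √x`, of the paths confined to `[0, h]` that end at
height `s`. Removing the last step gives `F_s = [s = 0] + y (F_{s-1} + F_{s+1})` for `0 ≤ s ≤ h`,
with `F_{-1} = F_{h+1} = 0`. Solving this recurrence downwards from the top wall gives
`y^t F_{h-t} = V_t F_h`, since `V_t = y^t U_t(1/(2y))` obeys the same recurrence
`V_{t+2} = V_{t+1} - y² V_t`; the equation at height `0` then reads `V_{h+1} F_h = y^h`, and the two
together give `V_{h+1} F_s = y^s V_{h-s}`.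
-/

theorem Nat.card_subtype_fin_succ_pi {α : Type*} [Fintype α] {n : ℕ}
    (Q : (Fin (n + 1) → α) → Prop) :
    Nat.card {p // Q p} = ∑ a, Nat.card {q : Fin n → α // Q (Fin.snoc q a)} := by
  rw [← Nat.card_sigma]
  exact Nat.card_congr (((Fin.snocEquiv fun _ => α).symm.subtypeEquiv fun p => by simp).trans
    (Equiv.subtypeProdEquivSigmaSubtype fun a q => Q (Fin.snoc q a)))

lemma pathHeight_zero {m : ℕ} (p : Fin m → Bool) : pathHeight p 0 = 0 := by
  simp [pathHeight]

lemma pathHeight_snoc_of_le {ℓ : ℕ} (q : Fin ℓ → Bool) (b : Bool) {k : ℕ} (hk : k ≤ ℓ) :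
    pathHeight (Fin.snoc q b) k = pathHeight q k := by
  unfold pathHeight
  rw [Finset.sum_filter, Finset.sum_filter, Fin.sum_univ_castSucc]
  simp [hk.not_gt]

lemma pathHeight_snoc_last {ℓ : ℕ} (q : Fin ℓ → Bool) (b : Bool) :
    pathHeight (Fin.snoc q b) (ℓ + 1) = pathHeight q ℓ + if b then 1 else -1 := by
  unfold pathHeight
  rw [Finset.sum_filter, Finset.sum_filter, Fin.sum_univ_castSucc]
  simp

def IsBoundedPath (h : ℕ) (s : ℤ) {ℓ : ℕ} (p : Fin ℓ → Bool) : Prop :=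
  (∀ k ≤ ℓ, 0 ≤ pathHeight p k ∧ pathHeight p k ≤ (h : ℤ)) ∧ pathHeight p ℓ = s

lemma isBoundedPath_snoc_iff {h : ℕ} {s : ℤ} (hs₀ : 0 ≤ s) (hsh : s ≤ h) {ℓ : ℕ}
    (q : Fin ℓ → Bool) (b : Bool) :
    IsBoundedPath h s (Fin.snoc q b) ↔ IsBoundedPath h (s - if b then 1 else -1) q := by
  constructor
  · rintro ⟨hbound, hend⟩
    refine ⟨fun k hk => ?_, ?_⟩
    · rw [← pathHeight_snoc_of_le q b hk]
      exact hbound k (by omega)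
    · rw [← hend, pathHeight_snoc_last]
      ring
  · rintro ⟨hbound, hend⟩
    have hlast : pathHeight (Fin.snoc q b) (ℓ + 1) = s := by
      rw [pathHeight_snoc_last, hend]
      ring
    refine ⟨fun k hk => ?_, hlast⟩
    rcases hk.lt_or_eq with hk | rfl
    · rw [pathHeight_snoc_of_le q b (by omega)]
      exact hbound k (by omega)
    · exact hlast ▸ ⟨hs₀, hsh⟩

noncomputable def pathCount (h : ℕ) (s : ℤ) (ℓ : ℕ) : ℕ :=
  Nat.card {p : Fin ℓ → Bool // IsBoundedPath h s p}

lemma pathCount_zero (h : ℕ) (s : ℤ) : pathCount h s 0 = if s = 0 then 1 else 0 := by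
  split_ifs with hs <;>
    simp [pathCount, IsBoundedPath, pathHeight_zero, hs, eq_comm (a := (0 : ℤ))]

lemma pathCount_eq_zero {h : ℕ} {s : ℤ} (hs : s < 0 ∨ h < s) (ℓ : ℕ) : pathCount h s ℓ = 0 := by
  rw [pathCount, Nat.card_eq_zero]
  left
  refine ⟨fun ⟨p, hbound, hend⟩ => ?_⟩
  have := hbound ℓ le_rfl
  omega

lemma pathCount_succ {h : ℕ} {s : ℤ} (hs₀ : 0 ≤ s) (hsh : s ≤ h) (ℓ : ℕ) :
    pathCount h s (ℓ + 1) = pathCount h (s - 1) ℓ + pathCount h (s + 1) ℓ := by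
  simp only [pathCount, Nat.card_subtype_fin_succ_pi, isBoundedPath_snoc_iff hs₀ hsh,
    Fintype.sum_bool]
  simp [sub_eq_add_neg]

lemma coe_chebV_add_two (k : ℕ) :
    (chebV (k + 2) : ℤ⟦X⟧) = (chebV (k + 1) : ℤ⟦X⟧) - PowerSeries.X ^ 2 * (chebV k : ℤ⟦X⟧) := by
  simp [chebV]

noncomputable def pathGenFun (h : ℕ) (s : ℤ) : ℤ⟦X⟧ :=
  PowerSeries.mk fun ℓ => (pathCount h s ℓ : ℤ)

lemma pathGenFun_eq_zero {h : ℕ} {s : ℤ} (hs : s < 0 ∨ h < s) : pathGenFun h s = 0 := by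
  ext ℓ
  simp [pathGenFun, pathCount_eq_zero hs]

lemma pathGenFun_eq {h : ℕ} {s : ℤ} (hs₀ : 0 ≤ s) (hsh : s ≤ h) :
    pathGenFun h s =
      (if s = 0 then 1 else 0) + PowerSeries.X * (pathGenFun h (s - 1) + pathGenFun h (s + 1)) := by
  ext (_ | ℓ)
  · split_ifs <;> simp [pathGenFun, pathCount_zero, *]
  · simp [pathGenFun, pathCount_succ hs₀ hsh, apply_ite (PowerSeries.coeff (ℓ + 1))]

lemma pathGenFun_eq_X_mul {h : ℕ} {s : ℤ} (hs₀ : 0 < s) (hsh : s ≤ h) :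
    pathGenFun h s = PowerSeries.X * (pathGenFun h (s - 1) + pathGenFun h (s + 1)) := by
  simpa [hs₀.ne'] using pathGenFun_eq hs₀.le hsh

/-- Solving the recurrence downwards from the top wall, where `pathGenFun h (h + 1) = 0`. -/
lemma X_pow_mul_pathGenFun {h t : ℕ} (ht : t ≤ h) :
    PowerSeries.X ^ t * pathGenFun h (h - t) = (chebV t : ℤ⟦X⟧) * pathGenFun h h := by
  induction t using Nat.twoStepInduction with
  | zero => simp [chebV]
  | one =>
    have hrec := pathGenFun_eq_X_mul (h := h) (s := h) (by omega) le_rfl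
    rw [pathGenFun_eq_zero (s := h + 1) (by omega), add_zero] at hrec
    simp [chebV, hrec]
  | more t ih₀ ih₁ =>
    have hrec := pathGenFun_eq_X_mul (h := h) (s := h - (t + 1)) (by omega) (by omega)
    rw [show (h : ℤ) - (t + 1) + 1 = h - t by ring] at hrec
    rw [show (h : ℤ) - ↑(t + 2) = h - (t + 1) - 1 by push_cast; ring, coe_chebV_add_two]
    push_cast at ih₁
    linear_combination (-PowerSeries.X ^ (t + 1)) * hrec + ih₁ (by omega)
      - PowerSeries.X ^ 2 * ih₀ (by omega)

/-- The bottom wall: the recurrence at height `0` pins down `pathGenFun h h`. -/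
lemma chebV_succ_mul_pathGenFun_top (h : ℕ) :
    (chebV (h + 1) : ℤ⟦X⟧) * pathGenFun h h = PowerSeries.X ^ h := by
  have hrec := pathGenFun_eq (h := h) (s := 0) le_rfl (by omega)
  rw [pathGenFun_eq_zero (s := 0 - 1) (by omega), zero_add, if_pos rfl] at hrec
  rcases h with _ | m
  · rw [pathGenFun_eq_zero (s := 0 + 1) (by omega), mul_zero, add_zero] at hrec
    simp [chebV, hrec]
  · have h₀ := X_pow_mul_pathGenFun (h := m + 1) (t := m + 1) le_rfl
    have h₁ := X_pow_mul_pathGenFun (h := m + 1) (t := m) (by omega)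
    rw [show ((m + 1 : ℕ) : ℤ) - ↑(m + 1) = 0 by simp] at h₀
    rw [show ((m + 1 : ℕ) : ℤ) - m = 0 + 1 by push_cast; ring] at h₁
    rw [coe_chebV_add_two]
    linear_combination PowerSeries.X ^ (m + 1) * hrec - h₀ + PowerSeries.X ^ 2 * h₁

/-- Fix `h ≥ 0` and `0 ≤ s ≤ h`. The generating function `Σ_P x^{ℓ(P)/2}` over lattice paths
`P` with steps `(1,1)`, `(1,−1)` starting at the origin, staying weakly between heights `0`
and `h`, and ending at height `s`, equals `Ũ_{h−s}/(√x · Ũ_{h+1})` where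
`Ũ_k = U_k(1/(2√x))`. Formal version, in the power series ring in `y = √x`
(so that `x^{ℓ/2} = y^ℓ`), after clearing denominators:
`(y^{h+1}Ũ_{h+1}) · Σ_ℓ (#paths of length ℓ)·y^ℓ = y^s · (y^{h−s}Ũ_{h−s})`. -/
theorem bounded_paths_genfun (h s : ℕ) (hs : s ≤ h) :
    ((chebV (h + 1) : Polynomial ℤ) : PowerSeries ℤ) *
        PowerSeries.mk (fun ℓ => (boundedPathCount h s ℓ : ℤ))
      = ((Polynomial.X ^ s * chebV (h - s) : Polynomial ℤ) : PowerSeries ℤ) := by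
  change _ * pathGenFun h s = _
  have hsub : (h : ℤ) - ↑(h - s) = s := by omega
  apply mul_left_cancel₀ (pow_ne_zero (h - s) PowerSeries.X_ne_zero)
  calc PowerSeries.X ^ (h - s) * ((chebV (h + 1) : ℤ⟦X⟧) * pathGenFun h s)
      = (chebV (h + 1) : ℤ⟦X⟧) * (PowerSeries.X ^ (h - s) * pathGenFun h (h - ↑(h - s))) := by
        rw [hsub]; ring
    _ = (chebV (h - s) : ℤ⟦X⟧) * ((chebV (h + 1) : ℤ⟦X⟧) * pathGenFun h h) := by
        rw [X_pow_mul_pathGenFun (Nat.sub_le h s)]; ring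
    _ = PowerSeries.X ^ (h - s) * ((Polynomial.X ^ s * chebV (h - s) : ℤ[X]) : ℤ⟦X⟧) := by
        rw [chebV_succ_mul_pathGenFun_top, ← pow_sub_mul_pow PowerSeries.X hs]
        push_cast
        ring
end

section
/- Evaluating the uniform product formula Π_{i=1}^{n} (h + e_i + 1)/(e_i + 1) with the Coxeter number h = 2n − 2 and exponents e_i = (1, 3, …, 2n−3, n−1) of type D_n yields C(2n, n) − C(2n−2, n−1). -/
/-!
With `n = m + 1` the factor `(2n − 2 + 2i)/(2i)` is `(m + i)/i`, so the product over
`i = 1, …, m` is `(2m)!/(m! m!) = C(2m, m)`. The recursion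
`(m + 1) C(2m + 2, m + 1) = 2(2m + 1) C(2m, m)` then gives
`C(2m + 2, m + 1) − C(2m, m) = ((3m + 1)/(m + 1)) C(2m, m)`, which is the claim.
-/

open Finset

variable {K : Type*} [Field K] [CharZero K]

theorem prod_Icc_add_div_eq_choose (m k : ℕ) :
    ∏ i ∈ Icc 1 k, ((m + i : K) / i) = (m + k).choose k := by
  induction k with
  | zero => simp
  | succ k ih =>
    have hpascal : ((m + k + 1 : ℕ) : K) * (m + k).choose k
        = (m + k + 1).choose (k + 1) * (k + 1 : ℕ) := by
      exact_mod_cast Nat.add_one_mul_choose_eq (m + k) k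
    rw [prod_Icc_succ_top (by omega), ih, ← add_assoc, mul_div_assoc',
      div_eq_iff (by exact_mod_cast k.succ_ne_zero)]
    push_cast at hpascal ⊢
    linear_combination hpascal

theorem prod_Icc_add_div_eq_centralBinom (m : ℕ) :
    ∏ i ∈ Icc 1 m, ((m + i : K) / i) = m.centralBinom := by
  rw [prod_Icc_add_div_eq_choose, Nat.centralBinom_eq_two_mul_choose, two_mul]

theorem centralBinom_succ_sub_centralBinom (m : ℕ) :
    ((m + 1).centralBinom : K) - m.centralBinom = (3 * m + 1) / (m + 1) * m.centralBinom := by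
  have hrec : ((m : K) + 1) * (m + 1).centralBinom = 2 * (2 * m + 1) * m.centralBinom := by
    exact_mod_cast Nat.succ_mul_centralBinom_succ m
  field_simp
  linear_combination hrec

theorem typeD_product_formula_general (n : ℕ) :
    ((2 * (n : ℚ) - 2 + (n : ℚ)) / (n : ℚ)) *
        ∏ i ∈ Finset.Icc 1 (n - 1), ((2 * (n : ℚ) - 2 + 2 * (i : ℚ)) / (2 * (i : ℚ)))
      = (Nat.choose (2 * n) n : ℚ) - (Nat.choose (2 * n - 2) (n - 1) : ℚ) := by
  rcases n with _ | m
  · -- `x / 0 = 0` and truncated subtraction make both sides `0`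
    simp
  have hfactor : ∀ i ∈ Icc 1 m,
      (2 * ((m + 1 : ℕ) : ℚ) - 2 + 2 * i) / (2 * i) = (m + i) / i := fun i _ => by
    push_cast
    rw [← mul_div_mul_left _ _ (two_ne_zero : (2 : ℚ) ≠ 0)]
    ring_nf
  rw [Nat.add_sub_cancel, show 2 * (m + 1) - 2 = 2 * m by omega, prod_congr rfl hfactor,
    prod_Icc_add_div_eq_centralBinom, ← Nat.centralBinom_eq_two_mul_choose,
    ← Nat.centralBinom_eq_two_mul_choose, centralBinom_succ_sub_centralBinom]
  push_cast
  ring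

/-- Evaluating the uniform formula `Π_{i=1}^{n} (h + e_i + 1)/(e_i + 1)` with the Coxeter
number `h = 2n−2` and exponents `1, 3, …, 2n−3, n−1` of type `Dₙ` (n ≥ 2) yields
`C(2n,n) − C(2n−2,n−1)`:
`((2n−2+n)/n) · Π_{i=1}^{n−1} (2n−2+2i)/(2i) = C(2n, n) − C(2n−2, n−1)`. -/
theorem typeD_product_formula (n : ℕ) (hn : 2 ≤ n) :
    ((2 * (n : ℚ) - 2 + (n : ℚ)) / (n : ℚ)) *
        ∏ i ∈ Finset.Icc 1 (n - 1), ((2 * (n : ℚ) - 2 + 2 * (i : ℚ)) / (2 * (i : ℚ)))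
      = (Nat.choose (2 * n) n : ℚ) - (Nat.choose (2 * n - 2) (n - 1) : ℚ) :=
  typeD_product_formula_general n
end
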